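/- arXiv:1007.0526 — 5 statements merged into one kernel-verified Lean document; each statement's English description precedes it below -/
import Mathlib

section
/- Let (p_i)_{i≥1} be a sequence in a commutative ring, and define (a_n) by a_1 = 1 and a_{n+1} = Σ_{i=1}^{n} p_{n-i+1} a_i. Let P_n be the n×n upper Hessenberg Toeplitz matrix with (P_n)_{i,j} = p_{j-i+1} for j ≥ i, -1 for i = j+1, and 0 otherwise. Then for 0 ≤ k ≤ n, the sum S_{n-k} of all principal minors of P_n of order n-k equals Σ_{j_1 + j_2 + ... + j_{k+1} = n-k, j_t ≥ 0} a_{j_1+1} a_{j_2+1} ... a_{j_{k+1}+1}. -/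
/-!
Regard `P_n` as the upper-left corner of the infinite Hessenberg Toeplitz matrix. Its entries
vanish more than one step below the diagonal, so a principal minor on an index set `s` is
block upper triangular along the gaps of `s`: it is the product of the determinants `det P_j`
over the maximal runs of consecutive indices of `s`, each run giving a shifted copy of `P_j`.
Expanding along the first row gives `det P_j = a (j + 1)`. If `s` has `n - k` elements, the `k`
indices missing from `s` cut `{0, …, n - 1}` into `k + 1` runs whose lengths sum to `n - k`. We
peel off the first run and induct on `k`.
-/

/-- The n×n upper Hessenberg Toeplitz matrix built from the sequence `p`. -/
def hessP {R : Type*} [CommRing R] (p : ℕ → R) (n : ℕ) : Matrix (Fin n) (Fin n) R :=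
  Matrix.of fun i j =>
    if (i : ℕ) ≤ (j : ℕ) then p ((j : ℕ) - (i : ℕ) + 1)
    else if (i : ℕ) = (j : ℕ) + 1 then -1 else 0

open Finset

namespace Finset

theorem Nat.sum_antidiagonalTuple_succ {M : Type*} [AddCommMonoid M] (k n : ℕ)
    (f : (Fin (k + 1) → ℕ) → M) :
    ∑ x ∈ Nat.antidiagonalTuple (k + 1) n, f x =
      ∑ ij ∈ antidiagonal n, ∑ x ∈ Nat.antidiagonalTuple k ij.2, f (Fin.cons ij.1 x) := by
  change (((List.Nat.antidiagonalTuple (k + 1) n : List _) : Multiset _).map f).sum =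
    ((↑(List.Nat.antidiagonal n) : Multiset (ℕ × ℕ)).map _).sum
  simp only [Multiset.map_coe, Multiset.sum_coe, List.Nat.antidiagonalTuple, List.flatMap,
    List.map_flatten, List.map_map, List.sum_flatten]
  congr 1
  refine List.map_congr_left fun ij _ => ?_
  change _ = ((↑(List.Nat.antidiagonalTuple k ij.2) : Multiset (Fin k → ℕ)).map _).sum
  simp only [Multiset.map_coe, Multiset.sum_coe, Function.comp_apply, List.map_map]
  rfl

theorem mem_range_union_map_addLeftEmbedding {d x : ℕ} {t : Finset ℕ} :
    x ∈ range d ∪ t.map (addLeftEmbedding (d + 1)) ↔ x < d ∨ d < x ∧ x - (d + 1) ∈ t := by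
  simp only [mem_union, mem_range, mem_map, addLeftEmbedding_apply]
  constructor
  · rintro (h | ⟨y, hy, rfl⟩)
    · exact Or.inl h
    · exact Or.inr ⟨by omega, by simpa using hy⟩
  · rintro (h | ⟨h, hx⟩)
    · exact Or.inl h
    · exact Or.inr ⟨_, hx, by omega⟩

theorem card_range_union_map_addLeftEmbedding (d : ℕ) (t : Finset ℕ) :
    #(range d ∪ t.map (addLeftEmbedding (d + 1))) = d + #t := by
  rw [card_union_of_disjoint, card_range, card_map]
  refine disjoint_left.2 fun x hx => ?_
  simp only [mem_range, mem_map, addLeftEmbedding_apply] at hx ⊢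
  omega

theorem range_union_map_addLeftEmbedding_inj {d d' : ℕ} {t t' : Finset ℕ} :
    range d ∪ t.map (addLeftEmbedding (d + 1)) = range d' ∪ t'.map (addLeftEmbedding (d' + 1)) ↔
      d = d' ∧ t = t' := by
  refine ⟨fun h => ?_, by rintro ⟨rfl, rfl⟩; rfl⟩
  have gap_le : ∀ {d d' : ℕ} {t t' : Finset ℕ},
      range d ∪ t.map (addLeftEmbedding (d + 1)) =
        range d' ∪ t'.map (addLeftEmbedding (d' + 1)) → d ≤ d' := by
    intro d d' t t' h
    by_contra! hlt
    have := h ▸ mem_range_union_map_addLeftEmbedding.2 (Or.inl hlt)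
    rw [mem_range_union_map_addLeftEmbedding] at this
    omega
  obtain rfl := le_antisymm (gap_le h) (gap_le h.symm)
  refine ⟨rfl, ext fun x => ?_⟩
  simpa [mem_range_union_map_addLeftEmbedding, show ¬ d + 1 + x < d by omega] using
    congrArg (d + 1 + x ∈ ·) h

-- `d` is the least number missing from `s`.
theorem exists_eq_range_union_map_addLeftEmbedding (s : Finset ℕ) :
    ∃ d, ∃ t : Finset ℕ, s = range d ∪ t.map (addLeftEmbedding (d + 1)) := by
  have h : ∃ d, d ∉ s := Infinite.exists_notMem_finset s
  refine ⟨Nat.find h, s.preimage (Nat.find h + 1 + ·) (add_right_injective _).injOn, ?_⟩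
  ext x
  rw [mem_range_union_map_addLeftEmbedding, mem_preimage]
  rcases lt_trichotomy x (Nat.find h) with hx | rfl | hx
  · simpa [hx] using not_not.1 (Nat.find_min h hx)
  · simpa using Nat.find_spec h
  · rw [show Nat.find h + 1 + (x - (Nat.find h + 1)) = x by omega]
    simp [hx, hx.not_gt]

theorem sum_powersetCard_range_eq_sum_sum {M : Type*} [AddCommMonoid M]
    (F : Finset ℕ → M) (m k : ℕ) :
    ∑ s ∈ powersetCard m (range (m + k + 1)), F s =
      ∑ d ∈ range (m + 1), ∑ t ∈ powersetCard (m - d) (range (m - d + k)),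
        F (range d ∪ t.map (addLeftEmbedding (d + 1))) := by
  rw [sum_sigma']
  symm
  refine sum_nbij (fun x => range x.1 ∪ x.2.map (addLeftEmbedding (x.1 + 1))) ?_ ?_ ?_
    (fun _ _ => rfl)
  · rintro ⟨d, t⟩ hx
    simp only [mem_sigma, mem_range, mem_powersetCard] at hx ⊢
    obtain ⟨hd, hts, htc⟩ := hx
    refine ⟨fun x hx => mem_range.2 ?_, by rw [card_range_union_map_addLeftEmbedding]; omega⟩
    rcases mem_range_union_map_addLeftEmbedding.1 hx with hx | ⟨hx, hxt⟩
    · omega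
    · have := mem_range.1 (hts hxt)
      omega
  · rintro ⟨d, t⟩ - ⟨d', t'⟩ - h
    obtain ⟨rfl, rfl⟩ := range_union_map_addLeftEmbedding_inj.1 h
    rfl
  · intro s hs
    rw [mem_coe, mem_powersetCard] at hs
    obtain ⟨d, t, rfl⟩ := exists_eq_range_union_map_addLeftEmbedding s
    have hcard := card_range_union_map_addLeftEmbedding d t
    refine ⟨⟨d, t⟩, ?_, rfl⟩
    simp only [coe_sigma, Set.mem_sigma_iff, mem_coe, mem_range, mem_powersetCard]
    refine ⟨by omega, fun x hx => mem_range.2 ?_, by omega⟩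
    have := hs.1 (mem_union_right _ (mem_map_of_mem (addLeftEmbedding (d + 1)) hx))
    rw [addLeftEmbedding_apply, mem_range] at this
    omega

end Finset

section Hessenberg

variable {R : Type*} [CommRing R] (p : ℕ → R)

-- `hessP p n` is the upper-left `n × n` corner of this infinite matrix.
def hessEntry (i j : ℕ) : R :=
  if i ≤ j then p (j - i + 1) else if i = j + 1 then -1 else 0

theorem hessEntry_add_add (c i j : ℕ) : hessEntry p (c + i) (c + j) = hessEntry p i j := by
  simp only [hessEntry, Nat.add_le_add_iff_left, Nat.add_sub_add_left, add_assoc,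
    Nat.add_left_cancel_iff]

theorem hessEntry_eq_zero {i j : ℕ} (h : j + 1 < i) : hessEntry p i j = 0 := by
  rw [hessEntry, if_neg (by omega), if_neg (by omega)]

theorem hessEntry_succ_self (i : ℕ) : hessEntry p (i + 1) i = -1 := by
  rw [hessEntry, if_neg (by omega), if_pos rfl]

def hessMinor {ι : Type*} [Fintype ι] [DecidableEq ι] (u v : ι → ℕ) : R :=
  (Matrix.of fun i j => hessEntry p (u i) (v j)).det

variable {ι κ : Type*} [Fintype ι] [DecidableEq ι] [Fintype κ] [DecidableEq κ]

theorem hessMinor_comp_equiv (e : κ ≃ ι) (u v : ι → ℕ) :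
    hessMinor p (u ∘ e) (v ∘ e) = hessMinor p u v :=
  Matrix.det_submatrix_equiv_self e (Matrix.of fun i j => hessEntry p (u i) (v j))

theorem hessMinor_add_left (c : ℕ) (u v : ι → ℕ) :
    hessMinor p (c + u ·) (c + v ·) = hessMinor p u v := by
  simp only [hessMinor, hessEntry_add_add]

theorem hessMinor_sumElim (u₁ v₁ : ι → ℕ) (u₂ v₂ : κ → ℕ) (h : ∀ i j, v₁ j + 1 < u₂ i) :
    hessMinor p (Sum.elim u₁ u₂) (Sum.elim v₁ v₂) = hessMinor p u₁ v₁ * hessMinor p u₂ v₂ := by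
  rw [hessMinor, hessMinor, hessMinor, ← Matrix.det_fromBlocks_zero₂₁ _
    (Matrix.of fun i j => hessEntry p (u₁ i) (v₂ j))]
  congr 1
  ext (i | i) (j | j) <;> simp [hessEntry_eq_zero p (h _ _)]

theorem hessMinor_succ_self (c : ℕ) :
    hessMinor p (fun i : Fin c => (i : ℕ) + 1) (fun i => i) = (-1) ^ c := by
  rw [hessMinor, Matrix.det_of_isUpperTriangular]
  · simp [hessEntry_succ_self]
  · intro i j hij
    exact hessEntry_eq_zero p (by simp only [id] at hij; omega)

-- Deleting row `0` and column `c` leaves the blocks: rows `1, …, c` against columns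
-- `0, …, c - 1` (triangular, `-1` on the diagonal), and a shifted copy of `P_{m - c}`.
theorem det_submatrix_succ_succAbove_hessP {m : ℕ} (c : Fin (m + 1)) :
    ((hessP p (m + 1)).submatrix Fin.succ c.succAbove).det =
      (-1) ^ (c : ℕ) * (hessP p (m - c)).det := by
  change hessMinor p (fun i : Fin m => (i.succ : ℕ)) (fun j => (c.succAbove j : ℕ)) = _
  have hc : c + (m - c) = m := by omega
  rw [← hessMinor_comp_equiv p (finSumFinEquiv.trans (finCongr hc))]
  have hu : (fun i : Fin m => (i.succ : ℕ)) ∘ (finSumFinEquiv.trans (finCongr hc)) =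
      Sum.elim (fun i : Fin c => (i : ℕ) + 1) (fun i : Fin (m - c) => (c + 1) + (i : ℕ)) := by
    ext (i | i) <;>
      simp only [Function.comp_apply, Equiv.coe_trans, finSumFinEquiv_apply_left,
        finSumFinEquiv_apply_right, finCongr_apply, Fin.val_cast, Fin.val_castAdd, Fin.val_natAdd,
        Fin.val_succ, Sum.elim_inl, Sum.elim_inr]
    omega
  have hv : (fun j : Fin m => (c.succAbove j : ℕ)) ∘ (finSumFinEquiv.trans (finCongr hc)) =
      Sum.elim (fun i : Fin c => (i : ℕ)) (fun i : Fin (m - c) => (c + 1) + (i : ℕ)) := by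
    ext (i | i) <;>
      simp only [Function.comp_apply, Equiv.coe_trans, finSumFinEquiv_apply_left,
        finSumFinEquiv_apply_right, finCongr_apply, Fin.succAbove, Fin.lt_def, Fin.val_castSucc,
        Fin.val_cast, Fin.val_castAdd, Fin.val_natAdd, Fin.val_succ, Fin.is_lt, ↓reduceIte,
        add_lt_iff_neg_left, not_lt_zero, Sum.elim_inl, Sum.elim_inr]
    omega
  rw [hu, hv, hessMinor_sumElim p _ _ _ _ (fun i j => by omega), hessMinor_succ_self,
    hessMinor_add_left]
  rfl

variable {p} {a : ℕ → R}

theorem apply_add_two_eq_sum_fin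
    (harec : ∀ n ≥ 1, a (n + 1) = ∑ i ∈ Icc 1 n, p (n - i + 1) * a i) (m : ℕ) :
    a (m + 2) = ∑ c : Fin (m + 1), p (c + 1) * a (m - c + 1) := by
  rw [harec (m + 1) (by omega), ← Ico_add_one_right_eq_Icc, sum_Ico_eq_sum_range,
    Fin.sum_univ_eq_sum_range (fun c => p (c + 1) * a (m - c + 1)), ← sum_range_reflect]
  refine sum_congr rfl fun c hc => ?_
  rw [mem_range] at hc
  congr 2 <;> omega

theorem det_hessP (ha1 : a 1 = 1)
    (harec : ∀ n ≥ 1, a (n + 1) = ∑ i ∈ Icc 1 n, p (n - i + 1) * a i) (n : ℕ) :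
    (hessP p n).det = a (n + 1) := by
  induction n using Nat.strong_induction_on with
  | _ n ih =>
  cases n with
  | zero => rw [Matrix.det_isEmpty, ha1]
  | succ m =>
    rw [Matrix.det_succ_row_zero, apply_add_two_eq_sum_fin harec]
    refine sum_congr rfl fun c _ => ?_
    have hentry : hessP p (m + 1) 0 c = p (c + 1) := by simp [hessP]
    have hsign : (-1 : R) ^ (c : ℕ) * (-1) ^ (c : ℕ) = 1 := by
      rw [← mul_pow, neg_one_mul, neg_neg, one_pow]
    rw [hentry, det_submatrix_succ_succAbove_hessP, ih _ (by omega)]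
    linear_combination (p (c + 1) * a (m - c + 1)) * hsign

variable (p)

def hessPrincipalMinor (s : Finset ℕ) : R := hessMinor p ((↑) : s → ℕ) (↑)

theorem det_submatrix_hessP {n : ℕ} (s : Finset (Fin n)) :
    ((hessP p n).submatrix (fun i : s => (i : Fin n)) (fun j : s => (j : Fin n))).det =
      hessPrincipalMinor p (s.map Fin.valEmbedding) := by
  rw [hessPrincipalMinor, ← hessMinor_comp_equiv p (s.equivMap Fin.valEmbedding)]
  rfl

theorem hessPrincipalMinor_range (n : ℕ) :
    hessPrincipalMinor p (range n) = (hessP p n).det := by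
  rw [← Nat.Iio_eq_range, ← Fin.map_valEmbedding_univ, ← det_submatrix_hessP]
  exact Matrix.det_submatrix_equiv_self (Equiv.subtypeUnivEquiv mem_univ) _

theorem hessPrincipalMinor_map_addLeftEmbedding (c : ℕ) (t : Finset ℕ) :
    hessPrincipalMinor p (t.map (addLeftEmbedding c)) = hessPrincipalMinor p t := by
  rw [hessPrincipalMinor, ← hessMinor_comp_equiv p (t.equivMap _)]
  exact hessMinor_add_left p c _ _

theorem hessPrincipalMinor_union {s t : Finset ℕ} (h : ∀ i ∈ s, ∀ j ∈ t, i + 1 < j) :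
    hessPrincipalMinor p (s ∪ t) = hessPrincipalMinor p s * hessPrincipalMinor p t := by
  have hst : Disjoint s t := disjoint_left.2 fun i hi hit => by have := h i hi i hit; omega
  rw [hessPrincipalMinor, ← hessMinor_comp_equiv p (Equiv.Finset.union s t hst)]
  have hcoe : ((↑) : ↥(s ∪ t) → ℕ) ∘ Equiv.Finset.union s t hst = Sum.elim (↑) (↑) := by
    ext (i | i) <;> rfl
  rw [hcoe]
  exact hessMinor_sumElim p _ _ _ _ fun j i => h i i.2 j j.2

theorem hessPrincipalMinor_range_union_map (d : ℕ) (t : Finset ℕ) :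
    hessPrincipalMinor p (range d ∪ t.map (addLeftEmbedding (d + 1))) =
      (hessP p d).det * hessPrincipalMinor p t := by
  rw [hessPrincipalMinor_union p, hessPrincipalMinor_range,
    hessPrincipalMinor_map_addLeftEmbedding]
  intro i hi j hj
  simp only [mem_range, mem_map, addLeftEmbedding_apply] at hi hj
  obtain ⟨j, -, rfl⟩ := hj
  omega

variable {p}

theorem sum_hessPrincipalMinor_powersetCard (ha1 : a 1 = 1)
    (harec : ∀ n ≥ 1, a (n + 1) = ∑ i ∈ Icc 1 n, p (n - i + 1) * a i) (k m : ℕ) :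
    ∑ s ∈ powersetCard m (range (m + k)), hessPrincipalMinor p s =
      ∑ j ∈ Nat.antidiagonalTuple (k + 1) m, ∏ t, a (j t + 1) := by
  induction k generalizing m with
  | zero =>
    rw [add_zero, show powersetCard m (range m) = {range m} by
      simpa using powersetCard_self (range m)]
    simp [hessPrincipalMinor_range, det_hessP ha1 harec]
  | succ k ih =>
    rw [← add_assoc, sum_powersetCard_range_eq_sum_sum, Nat.sum_antidiagonalTuple_succ,
      Nat.sum_antidiagonal_eq_sum_range_succ_mk]
    refine sum_congr rfl fun d _ => ?_
    simp only [hessPrincipalMinor_range_union_map, det_hessP ha1 harec, ← mul_sum, ih,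
      Fin.prod_univ_succ, Fin.cons_zero, Fin.cons_succ]

end Hessenberg

theorem sum_principal_minors_hessP {R : Type*} [CommRing R] (p : ℕ → R) (a : ℕ → R)
    (ha1 : a 1 = 1)
    (harec : ∀ n ≥ 1, a (n + 1) = ∑ i ∈ Finset.Icc 1 n, p (n - i + 1) * a i)
    (n k : ℕ) (hk : k ≤ n) :
    ∑ s ∈ Finset.powersetCard (n - k) (Finset.univ : Finset (Fin n)),
        ((hessP p n).submatrix (fun i : s => (i : Fin n)) (fun j : s => (j : Fin n))).det
      = ∑ j ∈ Finset.Nat.antidiagonalTuple (k + 1) (n - k), ∏ t, a (j t + 1) := by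
  obtain ⟨m, rfl⟩ := Nat.exists_eq_add_of_le' hk
  simp_rw [det_submatrix_hessP, Nat.add_sub_cancel]
  calc ∑ s ∈ powersetCard m univ, hessPrincipalMinor p (s.map Fin.valEmbedding)
      = ∑ s ∈ powersetCard m (range (m + k)), hessPrincipalMinor p s := by
        rw [← Nat.Iio_eq_range, ← Fin.map_valEmbedding_univ, powersetCard_map, sum_map]
        rfl
    _ = _ := sum_hessPrincipalMinor_powersetCard ha1 harec k m
end

section
/- For nonnegative integers n and k with n ≥ k, the convolved Fibonacci identity holds: Σ_{j_1 + j_2 + ... + j_{k+1} = n-k, j_t ≥ 0} F_{j_1+1} F_{j_2+1} ... F_{j_{k+1}+1} = Σ_{i=0}^{⌊(n-k)/2⌋} C(n-i, i) · C(n-2i, k), where F_1 = F_2 = 1 are Fibonacci numbers. -/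
/-!
The left-hand side is the coefficient of `x^(n-k)` in `F(x)^(k+1)`, where
`F(x) = ∑ F_{j+1} x^j = 1/(1 - (x + x²))`. Substituting `x + x²` into
`(1 - y)^-(k+1) = ∑ C(k+N, k) y^N` gives
`F(x)^(k+1) = ∑_N C(k+N, k) x^N (1 + x)^N`, whose coefficient of `x^m` is
`∑_N C(k+N, k) C(N, m-N)`. Putting `N = n-k-i` and using the trinomial revision
`C(s, k) C(s-k, i) = C(s, i) C(s-i, k)` yields the right-hand side.
-/

open PowerSeries Finset

theorem Nat.choose_mul_choose_sub_comm (s k i : ℕ) :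
    s.choose k * (s - k).choose i = s.choose i * (s - i).choose k := by
  have hk := Nat.choose_mul (n := s) (Nat.le_add_right k i)
  have hi := Nat.choose_mul (n := s) (Nat.le_add_left i k)
  rw [Nat.add_sub_cancel_left] at hk
  rw [Nat.add_sub_cancel] at hi
  rw [← hk, ← hi, Nat.choose_symm_add]

theorem Nat.sum_range_add_choose_mul_choose_sub {n k : ℕ} (hk : k ≤ n) :
    ∑ N ∈ range (n - k + 1), (k + N).choose k * N.choose (n - k - N)
      = ∑ i ∈ range ((n - k) / 2 + 1), (n - i).choose i * (n - 2 * i).choose k := by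
  rw [← sum_range_reflect]
  have hterm : ∀ i ∈ range (n - k + 1), (k + (n - k + 1 - 1 - i)).choose k *
      (n - k + 1 - 1 - i).choose (n - k - (n - k + 1 - 1 - i))
        = (n - i).choose i * (n - 2 * i).choose k := by
    intro i hi
    rw [mem_range] at hi
    rw [show k + (n - k + 1 - 1 - i) = n - i by omega, show n - k + 1 - 1 - i = n - i - k by omega,
      show n - k - (n - i - k) = i by omega, Nat.choose_mul_choose_sub_comm, Nat.sub_sub, ← two_mul]
  rw [sum_congr rfl hterm]
  refine (sum_subset (fun i hi ↦ ?_) fun i _ hi ↦ ?_).symm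
  · simp only [mem_range] at hi ⊢
    omega
  · rw [mem_range] at hi
    rcases lt_or_ge (n - i) i with hni | hin
    · rw [Nat.choose_eq_zero_of_lt hni, zero_mul]
    · rw [Nat.choose_eq_zero_of_lt (n := n - 2 * i) (by omega), mul_zero]

namespace PowerSeries

theorem coeff_mk_pow {R : Type*} [CommSemiring R] (f : ℕ → R) (c m : ℕ) :
    coeff m (mk f ^ c) = ∑ j ∈ Nat.antidiagonalTuple c m, ∏ t, f (j t) := by
  rw [← Fin.prod_const, coeff_prod, finsuppAntidiag, sum_map,
    ← piAntidiag_univ_fin_eq_antidiagonalTuple, ← sum_attach (piAntidiag _ _)]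
  simp

variable {R : Type*} [CommRing R]

theorem coeff_pow_eq_sum_choose_mul_coeff_pow {F P : R⟦X⟧}
    (hP : constantCoeff P = 0) (hF : (1 - P) * F = 1) (k m : ℕ) :
    coeff m (F ^ (k + 1)) = ∑ N ∈ range (m + 1), ((k + N).choose k : R) * coeff m (P ^ N) := by
  have hsubst : HasSubst P := HasSubst.of_constantCoeff_zero' hP
  have hpow : F ^ (k + 1) = (invOneSubPow R (k + 1)).val.subst P := by
    refine left_inv_eq_right_inv (a := (1 - P) ^ (k + 1)) ?_ ?_
    · rw [← mul_pow, mul_comm, hF, one_pow]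
    · have := congrArg (substAlgHom hsubst (R := R)) (invOneSubPow R (k + 1)).inv_val
      rwa [invOneSubPow_inv_eq_one_sub_pow, map_mul, map_pow, map_sub, map_one, substAlgHom_X,
        coe_substAlgHom] at this
  rw [hpow, coeff_subst' hsubst, finsum_eq_sum_of_support_subset (s := range (m + 1))]
  · simp [invOneSubPow_val_succ_eq_mk_add_choose]
  · intro N hN
    rw [coe_range, Set.mem_Iio, Nat.lt_succ_iff]
    by_contra! hmN
    have hlt : (m : ℕ∞) < (P ^ N).order :=
      (ENat.natCast_lt_natCast.mpr hmN).trans_le (le_order_pow_of_constantCoeff_eq_zero N hP)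
    exact hN (by simp only [coeff_of_lt_order m hlt, smul_zero])

theorem coeff_X_add_X_sq_pow {N m : ℕ} (h : N ≤ m) :
    coeff m ((X + X ^ 2 : R⟦X⟧) ^ N) = N.choose (m - N) := by
  have : (X + X ^ 2 : R⟦X⟧) ^ N = X ^ N * (((1 + Polynomial.X) ^ N : Polynomial R) : R⟦X⟧) := by
    rw [Polynomial.coe_pow, Polynomial.coe_add, Polynomial.coe_one, Polynomial.coe_X, ← mul_pow]
    ring
  rw [this, coeff_X_pow_mul', if_pos h, Polynomial.coeff_coe, Polynomial.coeff_one_add_X_pow]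

end PowerSeries

noncomputable def fibSeries (R : Type*) [CommRing R] : R⟦X⟧ := mk fun d ↦ (Nat.fib (d + 1) : R)

theorem one_sub_X_add_X_sq_mul_fibSeries {R : Type*} [CommRing R] :
    (1 - (X + X ^ 2)) * fibSeries R = 1 := by
  rw [sub_mul, one_mul, sub_eq_iff_eq_add]
  ext (_ | _ | d)
  · simp [fibSeries]
  · simp [fibSeries, add_mul, pow_two, mul_assoc, coeff_succ_X_mul]
  · simp [fibSeries, add_mul, pow_two, mul_assoc, coeff_succ_X_mul, Nat.fib_add_two]
    ring

theorem convolved_fibonacci (n k : ℕ) (hk : k ≤ n) :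
    ∑ j ∈ Finset.Nat.antidiagonalTuple (k + 1) (n - k), ∏ t, Nat.fib (j t + 1)
      = ∑ i ∈ Finset.range ((n - k) / 2 + 1),
          (n - i).choose i * (n - 2 * i).choose k := by
  have hcoeff : coeff (n - k) (fibSeries ℤ ^ (k + 1))
      = ∑ N ∈ range (n - k + 1), ((k + N).choose k * N.choose (n - k - N) : ℤ) := by
    rw [coeff_pow_eq_sum_choose_mul_coeff_pow (by simp) one_sub_X_add_X_sq_mul_fibSeries]
    refine sum_congr rfl fun N hN ↦ ?_
    rw [coeff_X_add_X_sq_pow (Nat.lt_succ_iff.mp (mem_range.mp hN))]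
  rw [fibSeries, coeff_mk_pow] at hcoeff
  rw [← Nat.sum_range_add_choose_mul_choose_sub hk]
  exact_mod_cast hcoeff
end

section
/- For a positive integer n and nonnegative integer k, the number of weak compositions of n into nonnegative integers with exactly k parts equal to zero satisfies cw(n,k) = 2^{n-k-1} · Σ_{i=0}^{k} 2^i · C(k+1, i) · C(n-1, k-i). -/
/-!
Write `c(n, k)` for the number of weak compositions of `n` with `k` zeros. Splitting off the first
part, which is either `0` or `a + 1` followed by a weak composition of `n - a`, gives `c(0, k) = 1`
and `c(n + 1, k) = c(n + 1, k - 1) + ∑_{s ≤ n} c(s, k)`, the first term being absent when `k = 0`.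
Counting by the number of positive parts yields a closed form satisfying the same recursion, and
Vandermonde's identity `C(j + k + 1, k) = ∑_i C(k + 1, i) C(j, k - i)` together with
`∑_j C(n, j) C(j, r) = C(n, r) 2^(n - r)` turns it into the stated formula.
-/

open Finset

theorem List.length_le_count_zero_add_sum (l : List ℕ) : l.length ≤ l.count 0 + l.sum := by
  induction l with
  | nil => simp
  | cons a t ih =>
    rcases eq_or_ne a 0 with rfl | ha
    · simp only [List.length_cons, List.count_cons_self, List.sum_cons]; omega
    · simp only [List.length_cons, List.count_cons_of_ne ha, List.sum_cons]; omega

theorem finite_setOf_sum_eq_count_zero_le (n k : ℕ) :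
    {l : List ℕ | l.sum = n ∧ l.count 0 ≤ k}.Finite := by
  refine ((List.finite_length_le (Fin (n + 1)) (k + n)).image (List.map Fin.val)).subset ?_
  rintro l ⟨hsum, hcount⟩
  refine ⟨l.map (Fin.ofNat (n + 1)), ?_, ?_⟩
  · simpa using l.length_le_count_zero_add_sum.trans (by omega)
  · rw [List.map_map]
    conv_rhs => rw [← List.map_id l]
    refine List.map_congr_left fun x hx => ?_
    have := List.le_sum_of_mem hx
    simp only [Function.comp_apply, Fin.val_ofNat, id_eq]
    exact Nat.mod_eq_of_lt (by omega)

abbrev WeakComposition (n k : ℕ) := {l : List ℕ // l.sum = n ∧ l.count 0 = k}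

instance (n k : ℕ) : Finite (WeakComposition n k) :=
  ((finite_setOf_sum_eq_count_zero_le n k).subset fun _ h => ⟨h.1, h.2.le⟩).to_subtype

theorem card_weakComposition_zero (k : ℕ) : Nat.card (WeakComposition 0 k) = 1 := by
  refine Nat.card_eq_one_iff_exists.2 ⟨⟨List.replicate k 0, by simp⟩, fun ⟨l, hsum, hcount⟩ => ?_⟩
  have hzero : ∀ x ∈ l, x = 0 := List.sum_eq_zero_iff.1 hsum
  rw [List.count_eq_length.2 fun x hx => (hzero x hx).symm] at hcount
  exact Subtype.ext (List.eq_replicate_iff.2 ⟨hcount, hzero⟩)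

def WeakComposition.consEquiv (n k : ℕ) :
    WeakComposition (n + 1) k ≃
      {l : List ℕ // l.sum = n + 1 ∧ l.count 0 + 1 = k} ⊕
        Σ a : Fin (n + 1), WeakComposition (n - a) k where
  toFun
    | ⟨[], h⟩ => absurd h.1 (by simp)
    | ⟨0 :: t, h⟩ => .inl ⟨t, by simpa using h⟩
    | ⟨(a + 1) :: t, hsum, hcount⟩ =>
      .inr ⟨⟨a, by rw [List.sum_cons] at hsum; omega⟩, t,
        by simp only [List.sum_cons] at hsum ⊢; omega, by simpa using hcount⟩
  invFun
    | .inl ⟨t, h⟩ => ⟨0 :: t, by simpa using h⟩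
    | .inr ⟨a, t, hsum, hcount⟩ =>
      ⟨(a + 1 : ℕ) :: t, by rw [List.sum_cons, hsum]; omega, by simpa using hcount⟩
  left_inv
    | ⟨[], h⟩ => absurd h.1 (by simp)
    | ⟨0 :: _, _⟩ => rfl
    | ⟨(_ + 1) :: _, _, _⟩ => rfl
  right_inv
    | .inl _ => rfl
    | .inr ⟨_, _, _, _⟩ => rfl

theorem card_weakComposition_succ (n k : ℕ) :
    Nat.card (WeakComposition (n + 1) k) =
      Nat.card {l : List ℕ // l.sum = n + 1 ∧ l.count 0 + 1 = k} +
        ∑ s ∈ range (n + 1), Nat.card (WeakComposition s k) := by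
  have : Finite {l : List ℕ // l.sum = n + 1 ∧ l.count 0 + 1 = k} :=
    Set.Finite.to_subtype (s := {l | l.sum = n + 1 ∧ l.count 0 + 1 = k}) <|
      (finite_setOf_sum_eq_count_zero_le (n + 1) k).subset fun _ ⟨hsum, hcount⟩ => ⟨hsum, by omega⟩
  rw [Nat.card_congr (WeakComposition.consEquiv n k), Nat.card_sum, Nat.card_sigma,
    Fin.sum_univ_eq_sum_range (fun a => Nat.card (WeakComposition (n - a) k)),
    ← sum_range_reflect]
  congr 1
  refine sum_congr rfl fun s hs => ?_
  rw [add_tsub_cancel_right, Nat.sub_sub_self (mem_range_succ_iff.1 hs)]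

theorem card_weakComposition_succ_zero (n : ℕ) :
    Nat.card (WeakComposition (n + 1) 0) = ∑ s ∈ range (n + 1), Nat.card (WeakComposition s 0) := by
  simp [card_weakComposition_succ n 0]

theorem card_weakComposition_succ_succ (n k : ℕ) :
    Nat.card (WeakComposition (n + 1) (k + 1)) =
      Nat.card (WeakComposition (n + 1) k) +
        ∑ s ∈ range (n + 1), Nat.card (WeakComposition s (k + 1)) := by
  simp only [card_weakComposition_succ n, Nat.add_right_cancel_iff]

-- A weak composition of `n + 1` with `k` zeros and `j + 1` positive parts: `C(n, j)` choices of the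
-- positive parts, and `C(j + k + 1, k)` ways to distribute the zeros over the `j + 2` gaps.
def weakCompositionCount : ℕ → ℕ → ℕ
  | 0, _ => 1
  | n + 1, k => ∑ j ∈ range (n + 1), n.choose j * (j + k + 1).choose k

theorem sum_range_weakCompositionCount (N k : ℕ) :
    ∑ s ∈ range (N + 1), weakCompositionCount s k = ∑ j ∈ range (N + 1), N.choose j * (j + k).choose k := by
  induction N with
  | zero => simp [weakCompositionCount]
  | succ N ih =>
    have pascal := sum_choose_succ_mul (fun j _ => (j + k).choose k) N
    simp only [Nat.cast_id, Nat.add_right_comm _ 1 k] at pascal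
    rw [sum_range_succ, ih, weakCompositionCount, pascal]

theorem weakCompositionCount_succ_zero (n : ℕ) :
    weakCompositionCount (n + 1) 0 = ∑ s ∈ range (n + 1), weakCompositionCount s 0 := by
  rw [sum_range_weakCompositionCount, weakCompositionCount]
  simp

theorem weakCompositionCount_succ_succ (n k : ℕ) :
    weakCompositionCount (n + 1) (k + 1) =
      weakCompositionCount (n + 1) k + ∑ s ∈ range (n + 1), weakCompositionCount s (k + 1) := by
  rw [sum_range_weakCompositionCount, weakCompositionCount, weakCompositionCount, ← sum_add_distrib]
  refine sum_congr rfl fun j _ => ?_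
  rw [← mul_add]
  exact congrArg _ (Nat.choose_succ_succ' (j + k + 1) k)

theorem card_weakComposition (n k : ℕ) : Nat.card (WeakComposition n k) = weakCompositionCount n k := by
  induction k generalizing n with
  | zero =>
    induction n using Nat.strong_induction_on with
    | _ n ih =>
      cases n with
      | zero => exact card_weakComposition_zero 0
      | succ n =>
        rw [card_weakComposition_succ_zero, weakCompositionCount_succ_zero]
        exact sum_congr rfl fun s hs => ih s (mem_range.1 hs)
  | succ k ihk =>
    induction n using Nat.strong_induction_on with
    | _ n ih =>
      cases n with
      | zero => exact card_weakComposition_zero (k + 1)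
      | succ n =>
        rw [card_weakComposition_succ_succ, weakCompositionCount_succ_succ, ihk]
        exact congrArg _ (sum_congr rfl fun s hs => ih s (mem_range.1 hs))

theorem sum_range_choose_mul_choose (N r : ℕ) :
    ∑ j ∈ range (N + 1), N.choose j * j.choose r = N.choose r * 2 ^ (N - r) := by
  obtain hlt | ⟨m, rfl⟩ : N < r ∨ ∃ m, N = r + m :=
    (lt_or_ge N r).imp_right Nat.exists_eq_add_of_le
  · rw [Nat.choose_eq_zero_of_lt hlt, zero_mul]
    exact sum_eq_zero fun j hj =>
      by rw [Nat.choose_eq_zero_of_lt ((mem_range_succ_iff.1 hj).trans_lt hlt), mul_zero]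
  · rw [add_assoc, sum_range_add, sum_eq_zero fun j hj =>
      by rw [Nat.choose_eq_zero_of_lt (mem_range.1 hj), mul_zero]]
    simp [Nat.choose_mul, ← mul_sum, Nat.sum_range_choose]

theorem weakCompositionCount_succ (N k : ℕ) :
    weakCompositionCount (N + 1) k =
      ∑ i ∈ range (k + 1), (k + 1).choose i * (N.choose (k - i) * 2 ^ (N - (k - i))) := by
  have vandermonde (j : ℕ) :
      (j + k + 1).choose k = ∑ i ∈ range (k + 1), (k + 1).choose i * j.choose (k - i) := by
    rw [Nat.add_assoc, Nat.add_comm, Nat.add_choose_eq,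
      Nat.sum_antidiagonal_eq_sum_range_succ_mk]
  calc weakCompositionCount (N + 1) k
      = ∑ j ∈ range (N + 1), ∑ i ∈ range (k + 1),
          (k + 1).choose i * (N.choose j * j.choose (k - i)) := by
        simp only [weakCompositionCount, vandermonde, mul_sum, Nat.mul_left_comm]
    _ = ∑ i ∈ range (k + 1), (k + 1).choose i * (N.choose (k - i) * 2 ^ (N - (k - i))) := by
        rw [sum_comm]
        simp only [← mul_sum, sum_range_choose_mul_choose]

theorem choose_mul_pow_tsub_eq_zpow {K : Type*} [DivisionRing K] (a : K) (N r : ℕ) :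
    (N.choose r : K) * a ^ (N - r) = N.choose r * a ^ ((N : ℤ) - r) := by
  rcases le_or_gt r N with h | h
  · rw [← zpow_natCast, Nat.cast_sub h]
  · simp [Nat.choose_eq_zero_of_lt h]

theorem weakComp_unrestricted (n k : ℕ) (hn : 1 ≤ n) :
    (Nat.card {l : List ℕ // l.sum = n ∧ l.count 0 = k} : ℚ)
      = (2 : ℚ) ^ ((n : ℤ) - k - 1)
        * ∑ i ∈ Finset.range (k + 1),
            (2 : ℚ) ^ i * ((k + 1).choose i) * ((n - 1).choose (k - i)) := by
  obtain ⟨N, rfl⟩ := Nat.exists_eq_add_of_le' hn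
  rw [card_weakComposition, weakCompositionCount_succ, add_tsub_cancel_right, mul_sum]
  push_cast
  refine sum_congr rfl fun i hi => ?_
  have hik : i ≤ k := mem_range_succ_iff.1 hi
  rw [choose_mul_pow_tsub_eq_zpow, Nat.cast_sub hik,
    show (N : ℤ) - (k - i) = (N + 1 - k - 1) + i by ring, zpow_add₀ two_ne_zero, zpow_natCast]
  ring
end

section
/- For a positive integer n and nonnegative integer k, the number of weak compositions of n into parts from {0, 1, 2} with exactly k parts equal to zero equals Σ_{i=0}^{⌊n/2⌋} C(n+k-i, i) · C(n+k-2i, k). -/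
/-!
Sort the compositions by their number `i` of twos: such a composition has `n - 2i` ones, hence
length `n + k - i`. Words of length `L` over `{0, 1, 2}` are the terms of the expansion of
`(z + 1 + y) ^ L`, a word contributing `z ^ #zeros * y ^ #twos`, so those with `i` twos and
`k` zeros number `[y ^ i z ^ k] (y + (1 + z)) ^ L = C(L, i) * C(L - i, k)`.
-/

open Finset Polynomial

theorem List.sum_fixedLengthDigits_prod_map {R : Type*} [CommSemiring R] {b : ℕ} (hb : 1 < b)
    (f : ℕ → R) (L : ℕ) :
    ∑ w ∈ fixedLengthDigits hb L, (w.map f).prod = (∑ d ∈ Finset.range b, f d) ^ L := by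
  induction L with
  | zero => simp
  | succ L ih =>
    rw [fixedLengthDigits_succ_eq_disjiUnion, sum_disjiUnion, pow_succ', sum_mul]
    refine sum_congr rfl fun d _ ↦ ?_
    rw [consFixedLengthDigits, sum_image (by simp), ← ih, mul_sum]
    simp

noncomputable abbrev ternaryWords (L : ℕ) : Finset (List ℕ) :=
  List.fixedLengthDigits (b := 3) (by norm_num) L

theorem sum_ternaryWords_pow_count {R : Type*} [CommSemiring R] (z y : R) (L : ℕ) :
    ∑ w ∈ ternaryWords L, z ^ w.count 0 * y ^ w.count 2 = (z + 1 + y) ^ L := by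
  rw [show z + 1 + y = ∑ d ∈ range 3, (if d = 0 then z else 1) * (if d = 2 then y else 1) by
    simp [sum_range_succ], ← List.sum_fixedLengthDigits_prod_map (by norm_num : 1 < 3)]
  refine sum_congr rfl fun w _ ↦ ?_
  rw [List.prod_map_mul, List.prod_map_eq_pow_single 0 _ fun _ h _ ↦ if_neg h,
    List.prod_map_eq_pow_single 2 _ fun _ h _ ↦ if_neg h]
  simp

theorem card_filter_ternaryWords (L i k : ℕ) :
    #{w ∈ ternaryWords L | w.count 2 = i ∧ w.count 0 = k} = L.choose i * (L - i).choose k := by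
  -- in `ℕ[X][X]` the outer variable `X` marks twos and the inner one `C X` marks zeros
  have hgen := sum_ternaryWords_pow_count (C X : ℕ[X][X]) X L
  rw [show (C X + 1 + X : ℕ[X][X]) = X + C (X + 1) by simp; ring] at hgen
  calc _ = (((X + C (X + 1) : ℕ[X][X]) ^ L).coeff i).coeff k := by
        simp only [← hgen, ← C_pow, finsetSum_coeff, coeff_C_mul_X_pow, apply_ite (coeff · k),
          coeff_X_pow, coeff_zero, ← ite_and, sum_boole, Nat.cast_id, eq_comm]
    _ = L.choose i * (L - i).choose k := by
        rw [coeff_X_add_C_pow, coeff_mul_natCast, coeff_X_add_one_pow, mul_comm]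
        simp only [Nat.cast_id]

theorem List.sum_eq_count_one_add_two_mul_count_two {l : List ℕ} (h : ∀ x ∈ l, x ≤ 2) :
    l.sum = l.count 1 + 2 * l.count 2 := by
  rw [Finset.sum_list_count_of_subset l (Finset.range 3) fun x hx ↦
    mem_range.2 (Nat.lt_succ_of_le (h x (mem_toFinset.1 hx)))]
  simp [Finset.sum_range_succ, mul_comm]

theorem List.length_eq_count_zero_add_count_one_add_count_two {l : List ℕ}
    (h : ∀ x ∈ l, x ≤ 2) : l.length = l.count 0 + l.count 1 + l.count 2 := by
  have := Multiset.sum_count_eq_card (s := Finset.range 3) (m := (l : Multiset ℕ)) fun x hx ↦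
    mem_range.2 (Nat.lt_succ_of_le (h x (Multiset.mem_coe.1 hx)))
  simpa [Finset.sum_range_succ] using this.symm

theorem weakComp_iff_mem_biUnion (n k : ℕ) (l : List ℕ) :
    (l.sum = n ∧ (∀ x ∈ l, x ≤ 2) ∧ l.count 0 = k) ↔
      l ∈ (range (n / 2 + 1)).biUnion
        fun i ↦ {w ∈ ternaryWords (n + k - i) | w.count 2 = i ∧ w.count 0 = k} := by
  simp only [mem_biUnion, mem_filter, mem_range, List.mem_fixedLengthDigits_iff, Nat.lt_succ_iff]
  constructor
  · rintro ⟨hsum, h2, hk⟩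
    have := List.sum_eq_count_one_add_two_mul_count_two h2
    have := List.length_eq_count_zero_add_count_one_add_count_two h2
    exact ⟨l.count 2, by omega, ⟨by omega, h2⟩, rfl, hk⟩
  · rintro ⟨i, -, ⟨hlen, h2⟩, rfl, hk⟩
    have := List.sum_eq_count_one_add_two_mul_count_two h2
    have := List.length_eq_count_zero_add_count_one_add_count_two h2
    exact ⟨by omega, h2, hk⟩

theorem weakComp_parts_le_two_general (n k : ℕ) :
    Nat.card {l : List ℕ // l.sum = n ∧ (∀ x ∈ l, x ≤ 2) ∧ l.count 0 = k}
      = ∑ i ∈ Finset.range (n / 2 + 1),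
          (n + k - i).choose i * (n + k - 2 * i).choose k := by
  rw [Nat.card_congr (Equiv.subtypeEquivRight (weakComp_iff_mem_biUnion n k)),
    Nat.card_eq_finsetCard, card_biUnion]
  · refine sum_congr rfl fun i _ ↦ ?_
    rw [card_filter_ternaryWords, Nat.sub_sub, ← two_mul]
  · intro i _ j _ hij
    rw [Function.onFun, disjoint_left]
    exact fun w hi hj ↦ hij ((mem_filter.1 hi).2.1.symm.trans (mem_filter.1 hj).2.1)

theorem weakComp_parts_le_two (n k : ℕ) (hn : 1 ≤ n) :
    Nat.card {l : List ℕ // l.sum = n ∧ (∀ x ∈ l, x ≤ 2) ∧ l.count 0 = k}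
      = ∑ i ∈ Finset.range (n / 2 + 1),
          (n + k - i).choose i * (n + k - 2 * i).choose k :=
  weakComp_parts_le_two_general n k
end

section
/- Let P_n be the n×n matrix with entries equal to 1 whenever j - i ≥ k - 1 (i.e., at positions with column index exceeding row index by at least k-1), -1 on the subdiagonal (i = j+1), and 0 otherwise. Then det P_n equals the number of compositions of n in which every part is at least k. -/
/-!
Expanding `det P_{n+1}` along its last column, the minor obtained by deleting row `i` is block upper
triangular, with diagonal blocks `P_i` and an upper triangular block with `-1` on its diagonal, whose
sign cancels the cofactor sign. Hence `det P_{n+1} = ∑ det P_i` over the `i ≤ n` with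
`n + 1 - i ≥ k`, which is also the recursion for compositions obtained by removing the first part
`n + 1 - i`.
-/

open Finset

abbrev CompositionWithParts (p : ℕ → Prop) (n : ℕ) : Type :=
  {l : List ℕ // l.sum = n ∧ ∀ x ∈ l, p x}

namespace CompositionWithParts

variable {p : ℕ → Prop}

theorem finite (hp : ∀ x, p x → 0 < x) (n : ℕ) : Finite (CompositionWithParts p n) :=
  Finite.of_injective (fun l => (⟨l.1, fun hx => hp _ (l.2.2 _ hx), l.2.1⟩ : Composition n))
    fun _ _ h => Subtype.ext (congrArg Composition.blocks h)

theorem card_zero (hp : ∀ x, p x → 0 < x) : Nat.card (CompositionWithParts p 0) = 1 := by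
  rw [Nat.card_eq_one_iff_unique]
  refine ⟨⟨fun ⟨l, hl, hlp⟩ ⟨l', hl', hlp'⟩ => ?_⟩, ⟨⟨[], rfl, by simp⟩⟩⟩
  have eq_nil : ∀ l : List ℕ, l.sum = 0 → (∀ x ∈ l, p x) → l = [] := fun l hl hlp =>
    List.eq_nil_iff_forall_not_mem.2 fun x hx =>
      (hp x (hlp x hx)).ne' (List.sum_eq_zero_iff.1 hl x hx)
  simp only [eq_nil l hl hlp, eq_nil l' hl' hlp']

theorem bijective_cons (hp : ∀ x, p x → 0 < x) (n : ℕ) :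
    Function.Bijective fun t : Σ i : {i : Fin (n + 1) // p (n - i + 1)}, CompositionWithParts p i =>
      (⟨(n - t.1.1 + 1) :: t.2.1, by
        have := t.1.1.is_le; simp only [List.sum_cons, t.2.2.1]; omega,
        List.forall_mem_cons.2 ⟨t.1.2, t.2.2.2⟩⟩ : CompositionWithParts p (n + 1)) := by
  constructor
  · rintro ⟨⟨i, hi⟩, t, ht, htp⟩ ⟨⟨j, hj⟩, t', ht', htp'⟩ h
    obtain rfl : t = t' := (List.cons_eq_cons.1 (congrArg Subtype.val h)).2
    exact Sigma.subtype_ext (Subtype.ext (Fin.ext (ht.symm.trans ht'))) rfl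
  · rintro ⟨_ | ⟨a, t⟩, hl, hlp⟩
    · simp at hl
    · simp only [List.sum_cons, List.forall_mem_cons] at hl hlp
      have ha := hp a hlp.1
      refine ⟨⟨⟨⟨t.sum, by omega⟩, ?_⟩, t, rfl, hlp.2⟩, ?_⟩
      · rw [show n - t.sum + 1 = a by omega]; exact hlp.1
      · simp only [Subtype.mk.injEq, List.cons.injEq, and_true]; omega

theorem card_succ (hp : ∀ x, p x → 0 < x) [DecidablePred p] (n : ℕ) :
    Nat.card (CompositionWithParts p (n + 1))
      = ∑ i : Fin (n + 1), if p (n - i + 1) then Nat.card (CompositionWithParts p i) else 0 := by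
  have := finite hp
  rw [← Nat.card_congr (Equiv.ofBijective _ (bijective_cons hp n)), Nat.card_sigma, sum_ite,
    sum_const_zero, add_zero]
  exact (sum_subtype _ (fun _ => mem_filter_univ _)
    fun i : Fin (n + 1) => Nat.card (CompositionWithParts p i)).symm

end CompositionWithParts

namespace Matrix

variable {R : Type*} [CommRing R] {p : ℕ → Prop}

def hessenberg (a : ℕ → ℕ → R) (n : ℕ) : Matrix (Fin n) (Fin n) R :=
  of fun i j => if (i : ℕ) ≤ j then a i j else if (i : ℕ) = j + 1 then -1 else 0

theorem det_hessenberg_submatrix_succAbove_castSucc (a : ℕ → ℕ → R) {n : ℕ} (i : Fin (n + 1)) :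
    ((hessenberg a (n + 1)).submatrix i.succAbove Fin.castSucc).det
      = (-1) ^ (n - i) * (hessenberg a i).det := by
  have hi := i.is_le
  let e : Fin i ⊕ Fin (n - i) ≃ Fin n := finSumFinEquiv.trans (finCongr (by omega))
  have row_inl (r : Fin i) : (i.succAbove (e (.inl r)) : ℕ) = r := by
    rw [Fin.succAbove_of_castSucc_lt _ _ (by simp [e, Fin.lt_def])]; simp [e]
  have row_inr (r : Fin (n - i)) : (i.succAbove (e (.inr r)) : ℕ) = i + r + 1 := by
    rw [Fin.succAbove_of_le_castSucc _ _ (by simp [e, Fin.le_def])]; simp [e]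
  have col_inl (c : Fin i) : ((e (.inl c)).castSucc : ℕ) = c := by simp [e]
  have col_inr (c : Fin (n - i)) : ((e (.inr c)).castSucc : ℕ) = i + c := by simp [e]
  set M := ((hessenberg a (n + 1)).submatrix i.succAbove Fin.castSucc).submatrix e e with hM
  have h21 : M.toBlocks₂₁ = 0 := by
    ext r c
    have := c.isLt
    simp only [toBlocks₂₁, hM, of_apply, submatrix_apply, hessenberg, row_inr, col_inl, zero_apply]
    rw [if_neg (by omega), if_neg (by omega)]
  have h11 : M.toBlocks₁₁ = hessenberg a i := by
    ext r c
    simp only [toBlocks₁₁, hM, of_apply, submatrix_apply, hessenberg, row_inl, col_inl]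
  have h22 : M.toBlocks₂₂.det = (-1) ^ (n - i) := by
    rw [det_of_isUpperTriangular]
    · simp only [toBlocks₂₂, hM, of_apply, submatrix_apply, hessenberg, row_inr, col_inr]
      simp
    · intro r c hrc
      rw [id, id, Fin.lt_def] at hrc
      simp only [toBlocks₂₂, hM, of_apply, submatrix_apply, hessenberg, row_inr, col_inr]
      rw [if_neg (by omega), if_neg (by omega)]
  rw [← det_submatrix_equiv_self e, ← hM, ← M.fromBlocks_toBlocks, h21, det_fromBlocks_zero₂₁,
    h11, h22, mul_comm]

theorem det_hessenberg_succ (a : ℕ → ℕ → R) (n : ℕ) :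
    (hessenberg a (n + 1)).det = ∑ i : Fin (n + 1), a i n * (hessenberg a i).det := by
  rw [det_succ_column _ (Fin.last n)]
  refine sum_congr rfl fun i _ => ?_
  have hi := i.is_le
  rw [Fin.succAbove_last, det_hessenberg_submatrix_succAbove_castSucc]
  have hlast : hessenberg a (n + 1) i (Fin.last n) = a i n := by
    simp only [hessenberg, of_apply, Fin.val_last, if_pos hi]
  rw [hlast, Fin.val_last]
  have hsign : (-1 : R) ^ (i + n : ℕ) * (-1) ^ (n - i) = 1 := by
    rw [← pow_add, show i + n + (n - i) = 2 * n by omega, pow_mul, neg_one_sq, one_pow]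
  linear_combination (a i n * (hessenberg a i).det) * hsign

theorem det_hessenberg_indicator_eq_card [DecidablePred p] (hp : ∀ x, p x → 0 < x) (n : ℕ) :
    (hessenberg (fun i j => if p (j - i + 1) then (1 : R) else 0) n).det
      = Nat.card (CompositionWithParts p n) := by
  induction n using Nat.strong_induction_on with
  | _ n ih =>
    cases n with
    | zero => simp [CompositionWithParts.card_zero hp]
    | succ n =>
      rw [det_hessenberg_succ, CompositionWithParts.card_succ hp, Nat.cast_sum]
      refine sum_congr rfl fun i _ => ?_
      rw [ite_mul, one_mul, zero_mul, ih i (by omega), Nat.cast_ite, Nat.cast_zero]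

end Matrix

/-- The determinant of the n×n matrix with `1` whenever the column index exceeds the
row index by at least `k - 1`, `-1` on the subdiagonal and `0` otherwise equals the
number of compositions of `n` with all parts at least `k`. -/
theorem det_eq_card_compositions_parts_ge (n k : ℕ) (hk : 1 ≤ k) :
    (Matrix.of fun i j : Fin n =>
        if (i : ℕ) + (k - 1) ≤ (j : ℕ) then (1 : ℤ)
        else if (i : ℕ) = (j : ℕ) + 1 then -1 else 0).det
      = (Nat.card {l : List ℕ // l.sum = n ∧ ∀ x ∈ l, k ≤ x} : ℤ) := by
  convert Matrix.det_hessenberg_indicator_eq_card (p := (k ≤ ·)) (fun x hx => by omega) n using 2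
  ext i j
  simp only [Matrix.hessenberg, Matrix.of_apply]
  split_ifs <;> omega
end
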